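/- Let n ≥ 2 be an integer and let H > (n-1)/n. Let C_H > 0 be the unique positive real with coth(C_H) = nH/(n-1), and set D_H := sinh^{n-1}(C_H) − nH·I_{n-1}(C_H). Then D_H > 0, and for every d with 0 < d < D_H there exist b, c with 0 < b < C_H < c such that M_{H,d} < 0 on [0, b), M_{H,d} > 0 on (b, c), and M_{H,d} < 0 on (c, ∞). -/

import Mathlib

open Filter Topology

/-- `Ifun m t = ∫₀ᵗ sinh^m(r) dr`. -/
noncomputable def Ifun (m : ℕ) (t : ℝ) : ℝ := ∫ r in (0:ℝ)..t, Real.sinh r ^ m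

/-- `Mfun n H d t = sinh^{n-1}(t) − nH·I_{n-1}(t) − d`. -/
noncomputable def Mfun (n : ℕ) (H d t : ℝ) : ℝ :=
  Real.sinh t ^ (n - 1) - n * H * Ifun (n - 1) t - d

/-- `Pfun n H d t = sinh^{n-1}(t) + nH·I_{n-1}(t) + d`. -/
noncomputable def Pfun (n : ℕ) (H d t : ℝ) : ℝ :=
  Real.sinh t ^ (n - 1) + n * H * Ifun (n - 1) t + d

/-- `Qfun n H d t = (nH·I_{n-1}(t) + d)/√(M·P)`. -/
noncomputable def Qfun (n : ℕ) (H d t : ℝ) : ℝ :=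
  (n * H * Ifun (n - 1) t + d) / Real.sqrt (Mfun n H d t * Pfun n H d t)

/-! With `m = n − 2` and `a = nH` we have `M_{H,d} = g − d` for
`g(t) = sinh^{m+1}(t) − a·I_{m+1}(t)`, whose derivative is `sinh^m(t)·((m+1) cosh t − a sinh t)`.
Since `a > m + 1`, the second factor is strictly decreasing and vanishes exactly at `C`, so `g`
rises from `g(0) = 0` to its maximum `g(C) = D_H` and then decreases, with derivative bounded away
from zero beyond `C + 1`, hence to `−∞`. A level `d ∈ (0, D_H)` is therefore crossed exactly once
on each side of `C`. -/

open Real Set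

theorem hasDerivAt_Ifun (m : ℕ) (t : ℝ) : HasDerivAt (Ifun m) (sinh t ^ m) t := by
  have hc : Continuous fun r : ℝ => sinh r ^ m := continuous_sinh.pow m
  exact intervalIntegral.integral_hasDerivAt_right (hc.intervalIntegrable _ _)
    (hc.stronglyMeasurableAtFilter _ _) hc.continuousAt

theorem tendsto_atBot_of_hasDerivAt_le_neg {f f' : ℝ → ℝ} {s δ : ℝ}
    (hf : ∀ t, HasDerivAt f (f' t) t) (hδ : δ < 0) (hf' : ∀ t, s ≤ t → f' t ≤ δ) :
    Tendsto f atTop atBot := by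
  have hdiff : Differentiable ℝ f := fun t => (hf t).differentiableAt
  have hlin : ∀ t, s ≤ t → f t ≤ δ * t + (f s - δ * s) := by
    intro t hst
    have := (convex_Ici s).image_sub_le_mul_sub_of_deriv_le hdiff.continuous.continuousOn
      hdiff.differentiableOn (fun x hx => (hf x).deriv ▸ hf' x (interior_subset hx))
      s self_mem_Ici t hst hst
    linarith
  exact tendsto_atBot_mono' atTop ((eventually_ge_atTop s).mono hlin)
    (tendsto_atBot_add_const_right _ _ (tendsto_id.const_mul_atTop_of_neg hδ))

theorem exists_crossings_of_strictMonoOn_of_strictAntiOn {f : ℝ → ℝ} {a C d : ℝ}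
    (hf : Continuous f) (haC : a ≤ C) (hmono : StrictMonoOn f (Icc a C))
    (hanti : StrictAntiOn f (Ici C)) (hbot : Tendsto f atTop atBot)
    (had : f a < d) (hdC : d < f C) :
    ∃ b c, a < b ∧ b < C ∧ C < c ∧ (∀ t, a ≤ t → t < b → f t < d) ∧
      (∀ t, b < t → t < c → d < f t) ∧ ∀ t, c < t → f t < d := by
  obtain ⟨b, ⟨hab, hbC⟩, rfl⟩ := intermediate_value_Ioo haC hf.continuousOn ⟨had, hdC⟩
  obtain ⟨T, hTd, hCT⟩ :=
    ((hbot.eventually (eventually_lt_atBot (f b))).and (eventually_ge_atTop C)).exists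
  obtain ⟨c, ⟨hCc, -⟩, hc⟩ := intermediate_value_Ioo' hCT hf.continuousOn ⟨hTd, hdC⟩
  refine ⟨b, c, hab, hbC, hCc, fun t hat htb => ?_, fun t hbt htc => ?_, fun t hct => ?_⟩
  · exact hmono ⟨hat, by linarith⟩ ⟨hab.le, hbC.le⟩ htb
  · rcases le_or_gt t C with htC | hCt
    · exact hmono ⟨hab.le, hbC.le⟩ ⟨by linarith, htC⟩ hbt
    · exact hc ▸ hanti hCt.le hCc.le htc
  · exact hc ▸ hanti hCc.le (hCc.trans hct).le hct

section CoshSinh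

variable {p q C : ℝ}

theorem strictAnti_mul_cosh_sub_mul_sinh (hp : 0 ≤ p) (hpq : p < q) :
    StrictAnti fun t => p * cosh t - q * sinh t := by
  refine strictAnti_of_deriv_neg fun t => ?_
  rw [((hasDerivAt_cosh t).const_mul p |>.fun_sub ((hasDerivAt_sinh t).const_mul q)).deriv]
  -- `p sinh t − q cosh t = p (sinh t − cosh t) − (q − p) cosh t`
  nlinarith [mul_nonneg hp (sub_nonneg.2 (sinh_lt_cosh t).le), mul_pos (sub_pos.2 hpq) (cosh_pos t)]

variable (hp : 0 ≤ p) (hpq : p < q) (hC : p * cosh C = q * sinh C)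
include hp hpq hC

theorem mul_cosh_sub_mul_sinh_pos_iff {t : ℝ} : 0 < p * cosh t - q * sinh t ↔ t < C := by
  simpa [hC] using (strictAnti_mul_cosh_sub_mul_sinh hp hpq).lt_iff_gt (a := C) (b := t)

theorem mul_cosh_sub_mul_sinh_neg_iff {t : ℝ} : p * cosh t - q * sinh t < 0 ↔ C < t := by
  simpa [hC] using (strictAnti_mul_cosh_sub_mul_sinh hp hpq).lt_iff_gt (a := t) (b := C)

end CoshSinh

noncomputable def sinhPowSubIntegral (m : ℕ) (a t : ℝ) : ℝ := sinh t ^ m - a * Ifun m t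

section Profile

variable {m : ℕ} {a C : ℝ}

theorem sinhPowSubIntegral_succ_zero (m : ℕ) (a : ℝ) : sinhPowSubIntegral (m + 1) a 0 = 0 := by
  simp [sinhPowSubIntegral, Ifun]

theorem hasDerivAt_sinhPowSubIntegral_succ (m : ℕ) (a t : ℝ) :
    HasDerivAt (sinhPowSubIntegral (m + 1) a)
      (sinh t ^ m * ((m + 1) * cosh t - a * sinh t)) t := by
  refine (((hasDerivAt_sinh t).pow (m + 1)).fun_sub
    ((hasDerivAt_Ifun (m + 1) t).const_mul a)).congr_deriv ?_
  simp only [Nat.cast_add, Nat.cast_one, add_tsub_cancel_right, pow_succ]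
  ring

theorem continuous_sinhPowSubIntegral_succ (m : ℕ) (a : ℝ) :
    Continuous (sinhPowSubIntegral (m + 1) a) :=
  continuous_iff_continuousAt.2 fun t =>
    (hasDerivAt_sinhPowSubIntegral_succ m a t).continuousAt

variable (hma : (m + 1 : ℝ) < a) (hCa : (m + 1) * cosh C = a * sinh C)
include hma hCa

theorem strictMonoOn_sinhPowSubIntegral_succ :
    StrictMonoOn (sinhPowSubIntegral (m + 1) a) (Icc 0 C) := by
  refine strictMonoOn_of_deriv_pos (convex_Icc 0 C)
    (continuous_sinhPowSubIntegral_succ m a).continuousOn fun t ht => ?_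
  rw [interior_Icc] at ht
  rw [(hasDerivAt_sinhPowSubIntegral_succ m a t).deriv]
  exact mul_pos (pow_pos (sinh_pos_iff.2 ht.1) m)
    ((mul_cosh_sub_mul_sinh_pos_iff (by positivity) hma hCa).2 ht.2)

theorem strictAntiOn_sinhPowSubIntegral_succ (hC : 0 ≤ C) :
    StrictAntiOn (sinhPowSubIntegral (m + 1) a) (Ici C) := by
  refine strictAntiOn_of_deriv_neg (convex_Ici C)
    (continuous_sinhPowSubIntegral_succ m a).continuousOn fun t ht => ?_
  rw [interior_Ici] at ht
  rw [(hasDerivAt_sinhPowSubIntegral_succ m a t).deriv]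
  exact mul_neg_of_pos_of_neg (pow_pos (sinh_pos_iff.2 (hC.trans_lt ht)) m)
    ((mul_cosh_sub_mul_sinh_neg_iff (by positivity) hma hCa).2 ht)

theorem tendsto_sinhPowSubIntegral_succ_atBot (hC : 0 ≤ C) :
    Tendsto (sinhPowSubIntegral (m + 1) a) atTop atBot := by
  set φ : ℝ → ℝ := fun t => (m + 1) * cosh t - a * sinh t
  have hφ : StrictAnti φ := strictAnti_mul_cosh_sub_mul_sinh (by positivity) hma
  have hφneg : ∀ t, C < t → φ t < 0 := fun t =>
    (mul_cosh_sub_mul_sinh_neg_iff (by positivity) hma hCa).2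
  have hsinh : 0 < sinh (C + 1) := sinh_pos_iff.2 (by linarith)
  refine tendsto_atBot_of_hasDerivAt_le_neg (s := C + 1) (hasDerivAt_sinhPowSubIntegral_succ m a)
    (mul_neg_of_pos_of_neg (pow_pos hsinh m) (hφneg (C + 1) (by linarith))) fun t ht => ?_
  calc sinh t ^ m * φ t ≤ sinh (C + 1) ^ m * φ t :=
        mul_le_mul_of_nonpos_right (pow_le_pow_left₀ hsinh.le (sinh_le_sinh.2 ht) m)
          (hφneg t (by linarith)).le
    _ ≤ sinh (C + 1) ^ m * φ (C + 1) :=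
        mul_le_mul_of_nonneg_left (hφ.antitone ht) (pow_nonneg hsinh.le m)

end Profile

/-- Let `n ≥ 2` and `H > (n-1)/n`. Let `C_H > 0` be the unique positive real with
`coth(C_H) = nH/(n-1)` (i.e. `cosh C_H = (nH/(n-1))·sinh C_H`), and set
`D_H := sinh^{n-1}(C_H) − nH·I_{n-1}(C_H)`. Then `D_H > 0`, and for every `d` with
`0 < d < D_H` there exist `b, c` with `0 < b < C_H < c` such that `M_{H,d} < 0` on `[0,b)`,
`M_{H,d} > 0` on `(b,c)`, and `M_{H,d} < 0` on `(c,∞)`. -/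
theorem stmt15 (n : ℕ) (hn : 2 ≤ n) (H : ℝ) (hH : ((n : ℝ) - 1) / n < H)
    (C : ℝ) (hC : 0 < C)
    (hcoth : Real.cosh C = (n * H / ((n : ℝ) - 1)) * Real.sinh C) :
    0 < Real.sinh C ^ (n - 1) - n * H * Ifun (n - 1) C ∧
    ∀ d : ℝ, 0 < d → d < Real.sinh C ^ (n - 1) - n * H * Ifun (n - 1) C →
      ∃ b c : ℝ, 0 < b ∧ b < C ∧ C < c ∧
        (∀ t, 0 ≤ t → t < b → Mfun n H d t < 0) ∧
        (∀ t, b < t → t < c → 0 < Mfun n H d t) ∧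
        (∀ t, c < t → Mfun n H d t < 0) := by
  obtain ⟨m, rfl⟩ : ∃ m, n = m + 2 := ⟨n - 2, by omega⟩
  have hcast : ((m + 2 : ℕ) : ℝ) - 1 = m + 1 := by push_cast; ring
  have hma : (m + 1 : ℝ) < (m + 2 : ℕ) * H := by
    have := (div_lt_iff₀ (by positivity)).1 hH
    linarith
  have hCa : (m + 1 : ℝ) * cosh C = ((m + 2 : ℕ) * H) * sinh C := by
    rw [hcoth, hcast]
    field_simp
  set g := sinhPowSubIntegral (m + 1) ((m + 2 : ℕ) * H)
  have hmono := strictMonoOn_sinhPowSubIntegral_succ hma hCa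
  have hD : 0 < g C := sinhPowSubIntegral_succ_zero m _ ▸
    hmono (left_mem_Icc.2 hC.le) (right_mem_Icc.2 hC.le) hC
  refine ⟨hD, fun d hd hdD => ?_⟩
  obtain ⟨b, c, hb, hbC, hCc, hleft, hmid, hright⟩ :=
    exists_crossings_of_strictMonoOn_of_strictAntiOn (continuous_sinhPowSubIntegral_succ m _)
      hC.le hmono (strictAntiOn_sinhPowSubIntegral_succ hma hCa hC.le)
      (tendsto_sinhPowSubIntegral_succ_atBot hma hCa hC.le)
      ((sinhPowSubIntegral_succ_zero m _).trans_lt hd) hdD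
  refine ⟨b, c, hb, hbC, hCc, fun t ht htb => ?_, fun t hbt htc => ?_, fun t hct => ?_⟩
  · exact sub_neg.2 (hleft t ht htb)
  · exact sub_pos.2 (hmid t hbt htc)
  · exact sub_neg.2 (hright t hct)
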